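/- For every x ∈ {0,1}^n, if x_1 = Φ_n(x)_1 then Φ_n(x)_1 ≠ Φ_n^2(x)_1. -/

import Mathlib

/-!
Let `m` be the length of the maximal alternating prefix of `x`. If `m = 1`, `Φ` flips `x₁`, so
the hypothesis forces `m ≥ 2`. Then `Φ(x)` begins with two equal bits, its maximal alternating
prefix has length `1`, and the second application of `Φ` flips its first bit.
-/

/-- The prefix `(x₁,…,x_m)` (1-indexed) of `x ∈ {0,1}ⁿ` is alternating:
consecutive entries differ. -/
def AltPrefix (n : ℕ) (x : Fin n → Bool) (m : ℕ) : Prop :=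
  ∀ j : ℕ, j + 1 < m → ∀ hn : j + 1 < n,
    x ⟨j, Nat.lt_of_succ_lt hn⟩ ≠ x ⟨j + 1, hn⟩

instance (n : ℕ) (x : Fin n → Bool) : DecidablePred (AltPrefix n x) := fun m =>
  decidable_of_iff
    (∀ j ∈ Finset.range n, j + 1 < m → ∀ hn : j + 1 < n,
      x ⟨j, Nat.lt_of_succ_lt hn⟩ ≠ x ⟨j + 1, hn⟩)
    (by
      constructor
      · intro h j hj hn
        exact h j (Finset.mem_range.mpr (Nat.lt_of_succ_lt hn)) hj hn
      · intro h j _ hj hn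
        exact h j hj hn)

/-- The largest `m ≤ n` such that the prefix `(x₁,…,x_m)` is alternating. -/
def mIdx (n : ℕ) (x : Fin n → Bool) : ℕ :=
  Nat.findGreatest (AltPrefix n x) n

/-- The map `Φₙ : {0,1}ⁿ → {0,1}ⁿ`: with `m` the largest index such that
`(x₁,…,x_m)` is alternating, `yᵢ = 1 - x_m` for `i ≤ m` and `yᵢ = xᵢ` for `i > m`. -/
def Phi (n : ℕ) (x : Fin n → Bool) : Fin n → Bool :=
  fun i =>
    if _h : (i : ℕ) < mIdx n x then
      ! x ⟨mIdx n x - 1, by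
        have h2 : mIdx n x ≤ n := Nat.findGreatest_le n
        omega⟩
    else x i

/-- The alternating vector `(…,1,0,1,0)`: `x_j = 1` iff `j ≢ n (mod 2)` (1-indexed). -/
def altEnd0 (n : ℕ) : Fin n → Bool := fun i => decide (((i : ℕ) + 1) % 2 ≠ n % 2)

/-- The alternating vector `(…,0,1,0,1)`: `x_j = 1` iff `j ≡ n (mod 2)` (1-indexed). -/
def altEnd1 (n : ℕ) : Fin n → Bool := fun i => decide (((i : ℕ) + 1) % 2 = n % 2)

/-- The bit `c_j` (0-indexed `j`): XOR of consecutive bits `x_j, x_{j+1}`,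
and for the last position the bit itself. -/
def cbit (n : ℕ) (x : Fin n → Bool) (j : Fin n) : Bool :=
  if h : (j : ℕ) + 1 < n then xor (x j) (x ⟨(j : ℕ) + 1, h⟩) else x j

/-- The map `rₙ(x) = Σ_{j=1}^n c_j 2^{j-1}`. -/
def rmap (n : ℕ) (x : Fin n → Bool) : ℕ :=
  ∑ j : Fin n, (if cbit n x j then 1 else 0) * 2 ^ (j : ℕ)

/-- The recursively defined weights `w_{n,i,j}` (all indices 1-based; values for
indices outside `1 ≤ i, j ≤ n` are irrelevant junk). -/
def wgt : ℕ → ℕ → ℕ → ℤ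
  | 0, _, _ => 0
  | 1, _, _ => -1
  | (n+2), i, j =>
    if i = n + 2 then
      (if j = n + 2 then (n : ℤ)
       else if j % 2 = (n + 2) % 2 then -1 else 1)
    else if i = n + 1 then
      (if j = n + 2 then -1
       else if j = n + 1 then wgt (n+1) (n+1) j + 1
       else wgt (n+1) (n+1) j)
    else
      (if j = n + 2 then -1
       else if j = n + 1 then wgt (n+1) i j
       else wgt (n+1) i j + wgt n i j)

/-- The recursively defined thresholds `θ_{n,i}`. -/
def thr : ℕ → ℕ → ℤ
  | 0, _ => 0
  | 1, _ => 0
  | (n+2), i =>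
    if i = n + 2 then (((n + 2) / 2 : ℕ) : ℤ)
    else if i = n + 1 then thr (n+1) (n+1)
    else thr (n+1) i + thr n i - 1

section

variable {n : ℕ} (x : Fin n → Bool)

theorem mIdx_le : mIdx n x ≤ n :=
  Nat.findGreatest_le n

theorem altPrefix_one : AltPrefix n x 1 :=
  fun _ hj _ => absurd hj (by omega)

theorem one_le_mIdx (hn : 0 < n) : 1 ≤ mIdx n x :=
  Nat.le_findGreatest hn (altPrefix_one x)

theorem altPrefix_mIdx (hn : 0 < n) : AltPrefix n x (mIdx n x) :=
  Nat.findGreatest_spec hn (altPrefix_one x)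

variable {x}

theorem Phi_apply_of_lt {i : Fin n} (hi : (i : ℕ) < mIdx n x) :
    Phi n x i = !x ⟨mIdx n x - 1, by have := mIdx_le x; omega⟩ :=
  dif_pos hi

theorem Phi_apply_eq_of_lt_of_lt {i j : Fin n} (hi : (i : ℕ) < mIdx n x)
    (hj : (j : ℕ) < mIdx n x) : Phi n x i = Phi n x j := by
  rw [Phi_apply_of_lt hi, Phi_apply_of_lt hj]

theorem Phi_apply_zero_of_mIdx_eq_one (hn : 0 < n) (h : mIdx n x = 1) :
    Phi n x ⟨0, hn⟩ = !x ⟨0, hn⟩ := by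
  rw [Phi_apply_of_lt (by simp [h])]
  simp only [h, Nat.sub_self]

theorem mIdx_eq_one_of_apply_zero_eq_apply_one (hn : 1 < n)
    (h : x ⟨0, by omega⟩ = x ⟨1, hn⟩) : mIdx n x = 1 := by
  refine le_antisymm ?_ (one_le_mIdx x (by omega))
  by_contra! hm
  exact altPrefix_mIdx x (by omega) 0 hm hn h

theorem two_le_mIdx_of_apply_zero_eq (hn : 0 < n) (h : x ⟨0, hn⟩ = Phi n x ⟨0, hn⟩) :
    2 ≤ mIdx n x := by
  by_contra! hm
  have h1 : mIdx n x = 1 := by have := one_le_mIdx x hn; omega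
  rw [Phi_apply_zero_of_mIdx_eq_one hn h1] at h
  exact Bool.eq_not_self _ |>.mp h

end

/-- For every `x ∈ {0,1}ⁿ`: if `x₁ = Φₙ(x)₁` then `Φₙ(x)₁ ≠ Φₙ²(x)₁`. -/
theorem Phi_first_bit (n : ℕ) (hn : 0 < n) (x : Fin n → Bool)
    (h : x ⟨0, hn⟩ = Phi n x ⟨0, hn⟩) :
    Phi n x ⟨0, hn⟩ ≠ Phi n (Phi n x) ⟨0, hn⟩ := by
  have hm : 2 ≤ mIdx n x := two_le_mIdx_of_apply_zero_eq hn h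
  have hn1 : 1 < n := hm.trans (mIdx_le x)
  have hy : mIdx n (Phi n x) = 1 :=
    mIdx_eq_one_of_apply_zero_eq_apply_one hn1
      (Phi_apply_eq_of_lt_of_lt (by simp only; omega) (by simp only; omega))
  rw [Phi_apply_zero_of_mIdx_eq_one hn hy]
  exact Bool.ne_not.mpr rfl
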